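/- arXiv:0903.3128 — 3 statements merged into one kernel-verified Lean document; each statement's English description precedes it below -/
import Mathlib

section
/- For every positive integer m, the number of representations r(m) of m as an ordered sum of two squares of integers satisfies r(m) = 4 * ∑_{d ∣ m} χ(d), where χ is the non-principal Dirichlet character modulo 4. -/
/-!
`r(m)` counts the Gaussian integers of norm `m`. Writing `m = p ^ k * n` with `p ∤ n`, the count
for `m` is the count for `n` times a local factor that depends on how `p` factors in `ℤ[i]`:
* `2 = -i (1 + i) ^ 2` ramifies, and multiplication by `1 + i` matches norms `n` with norms `2 n`,
  so the factor is `1`;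
* `p ≡ 3 (mod 4)` stays prime, so an element whose norm is divisible by `p` is divisible by `p`:
  the factor is `1` for even `k` and `0` for odd `k`;
* `p ≡ 1 (mod 4)` splits as `π * star π` with `π ∤ star π`, and the elements of norm `p ^ k * n` are
  exactly the `π ^ a * star π ^ (k - a) * w` with `a ≤ k` and `w` of norm `n`, each written uniquely,
  so the factor is `k + 1`.
In every case the factor is `∑ i ≤ k, χ(p) ^ i = ∑ d ∣ p ^ k, χ(d)`, and `d ↦ ∑_{e ∣ d} χ(e)` is
multiplicative. With `r(1) = 4` units this gives the formula by induction on the prime powers of `m`.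
-/

open ArithmeticFunction Finset

/-- The non-principal Dirichlet character modulo 4, integer-valued. -/
def chiZ (d : ℕ) : ℤ := if d % 4 = 1 then 1 else if d % 4 = 3 then -1 else 0

lemma chiZ_eq_χ₄ (d : ℕ) : chiZ d = ZMod.χ₄ d := by
  rw [ZMod.χ₄_nat_eq_if_mod_four, chiZ]
  split_ifs <;> omega

lemma chiZ_mul (a b : ℕ) : chiZ (a * b) = chiZ a * chiZ b := by
  simp only [chiZ_eq_χ₄, Nat.cast_mul, map_mul]

lemma chiZ_pow (a k : ℕ) : chiZ (a ^ k) = chiZ a ^ k := by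
  simp only [chiZ_eq_χ₄, Nat.cast_pow, map_pow]

def chiZArith : ArithmeticFunction ℤ := ⟨chiZ, rfl⟩

lemma isMultiplicative_chiZArith : chiZArith.IsMultiplicative :=
  ⟨rfl, fun _ => chiZ_mul _ _⟩

lemma sum_divisors_chiZ_mul {m n : ℕ} (h : m.Coprime n) :
    ∑ d ∈ (m * n).divisors, chiZ d = (∑ d ∈ m.divisors, chiZ d) * ∑ d ∈ n.divisors, chiZ d := by
  have := (isMultiplicative_zeta.natCast.mul isMultiplicative_chiZArith).map_mul_of_coprime h
  simp only [coe_zeta_mul_apply] at this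
  exact this

lemma sum_divisors_chiZ_prime_pow {p : ℕ} (hp : p.Prime) (k : ℕ) :
    ∑ d ∈ (p ^ k).divisors, chiZ d = ∑ i ∈ range (k + 1), chiZ p ^ i := by
  simp only [Nat.sum_divisors_prime_pow hp, chiZ_pow]

lemma eq_and_eq_of_pow_mul_eq_pow_mul {M : Type*} [CommMonoidWithZero M] [IsCancelMulZero M]
    {π u v : M} (hπ : π ≠ 0) (hu : ¬ π ∣ u) (hv : ¬ π ∣ v) {a b : ℕ}
    (h : π ^ a * u = π ^ b * v) : a = b ∧ u = v := by
  wlog hab : a ≤ b generalizing a b u v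
  · exact (this hv hu h.symm (le_of_not_ge hab)).imp Eq.symm Eq.symm
  obtain ⟨c, rfl⟩ := Nat.exists_eq_add_of_le hab
  rw [pow_add, mul_assoc] at h
  have huv : u = π ^ c * v := mul_left_cancel₀ (pow_ne_zero a hπ) h
  rcases c with _ | c
  · simpa using huv
  · exact absurd (huv ▸ (dvd_pow_self π c.succ_ne_zero).mul_right v) hu

namespace Zsqrtd

variable {d : ℤ}

lemma norm_pow (z : ℤ√d) (k : ℕ) : (z ^ k).norm = z.norm ^ k :=
  map_pow normMonoidHom z k

instance isLocalHom_normMonoidHom : IsLocalHom (normMonoidHom (d := d)) :=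
  ⟨fun z => (isUnit_iff_norm_isUnit z).2⟩

lemma dvd_of_dvd_norm {π z : ℤ√d} (hπ : Prime π) (hconj : π ∣ star π) (h : π ∣ (z.norm : ℤ√d)) :
    π ∣ z := by
  rw [norm_eq_mul_conj] at h
  refine (hπ.dvd_or_dvd h).elim id fun h' => hconj.trans ?_
  simpa [starRingEnd_apply] using map_dvd (starRingEnd (ℤ√d)) h'

end Zsqrtd

namespace GaussianInt

lemma prime_of_prime_norm {π : GaussianInt} (h : Prime π.norm) : Prime π :=
  irreducible_iff_prime.1 (Irreducible.of_map (f := Zsqrtd.normMonoidHom) h.irreducible)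

lemma not_dvd_star_of_norm_eq_prime {π : GaussianInt} {p : ℕ} (hp : p.Prime) (hp2 : p ≠ 2)
    (hπ : π.norm = p) : ¬ π ∣ star π := by
  intro h
  have hp' : Prime (p : ℤ) := Nat.prime_iff_prime_int.1 hp
  -- `π` divides `π + star π = 2 re π`, so `p` divides `re π`, which is too small unless it is `0`.
  have hdvd : (p : ℤ) ∣ 2 * π.re * (2 * π.re) := by
    have hre : ((2 * π.re : ℤ) : GaussianInt) = π + star π := by ext <;> simp [two_mul]
    have := map_dvd Zsqrtd.normMonoidHom (hre ▸ dvd_add dvd_rfl h)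
    change π.norm ∣ Zsqrtd.norm ((2 * π.re : ℤ) : GaussianInt) at this
    rwa [hπ, Zsqrtd.norm_intCast] at this
  have hp2' : ¬ (p : ℤ) ∣ 2 := fun h2 =>
    hp2 ((Nat.prime_dvd_prime_iff_eq hp Nat.prime_two).1 (mod_cast h2))
  obtain ⟨c, hc⟩ : (p : ℤ) ∣ π.re := by
    rcases hp'.dvd_or_dvd hdvd with h | h <;> rcases hp'.dvd_or_dvd h with h | h <;> tauto
  rw [Zsqrtd.norm_def, hc] at hπ
  obtain rfl : c = 0 := by
    by_contra hc0
    have hp1 : (1 : ℤ) < p := mod_cast hp.one_lt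
    have hc1 : 1 ≤ c * c := mul_self_pos.2 hc0
    nlinarith [mul_self_nonneg π.im, mul_le_mul_of_nonneg_left hc1 (by positivity : (0 : ℤ) ≤ p * p),
      mul_lt_mul_of_pos_left hp1 (by positivity : (0 : ℤ) < p)]
  exact hp'.irreducible.not_isSquare ⟨π.im, by linear_combination -hπ⟩

noncomputable def normCount (m : ℤ) : ℕ := Nat.card {z : GaussianInt // z.norm = m}

lemma ncard_sq_add_sq_eq_normCount (m : ℤ) :
    {x : ℤ × ℤ | x.1 ^ 2 + x.2 ^ 2 = m}.ncard = normCount m := by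
  let e : ℤ × ℤ ≃ GaussianInt :=
    ⟨fun x => ⟨x.1, x.2⟩, fun z => (z.re, z.im), fun _ => rfl, fun _ => rfl⟩
  rw [← Nat.card_coe_set_eq]
  exact Nat.card_congr (e.subtypeEquiv fun x => by simp [e, Zsqrtd.norm_def, sq])

lemma normCount_one : normCount 1 = 4 := by
  have hunits : {z : GaussianInt | z.norm = 1}
      = ↑({⟨1, 0⟩, ⟨-1, 0⟩, ⟨0, 1⟩, ⟨0, -1⟩} : Finset GaussianInt) := by
    ext ⟨x, y⟩
    simp only [Set.mem_ofPred_eq, Zsqrtd.norm_def, coe_insert, coe_singleton, Set.mem_insert_iff,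
      Set.mem_singleton_iff, Zsqrtd.mk.injEq]
    constructor
    · intro h
      obtain ⟨hx1, hx2⟩ := abs_le.1 (abs_le_one_iff_mul_self_le_one.2
        (by nlinarith [mul_self_nonneg y] : x * x ≤ 1))
      obtain ⟨hy1, hy2⟩ := abs_le.1 (abs_le_one_iff_mul_self_le_one.2
        (by nlinarith [mul_self_nonneg x] : y * y ≤ 1))
      interval_cases x <;> interval_cases y <;> simp_all
    · rintro (h | h | h | h) <;> simp [h]
  calc normCount 1 = Nat.card {z : GaussianInt | z.norm = 1} := rfl
    _ = 4 := by rw [hunits, Nat.card_coe_set_eq, Set.ncard_coe_finset]; rfl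

lemma normCount_norm_mul {g : GaussianInt} (hg : g ≠ 0) {n : ℤ}
    (hdvd : ∀ z : GaussianInt, z.norm = g.norm * n → g ∣ z) :
    normCount (g.norm * n) = normCount n := by
  have hg' : g.norm ≠ 0 := by rwa [Ne, norm_eq_zero]
  refine (Nat.card_congr (Equiv.ofBijective
    (fun w : {w : GaussianInt // w.norm = n} => (⟨g * w, by rw [Zsqrtd.norm_mul, w.2]⟩ :
      {z : GaussianInt // z.norm = g.norm * n})) ⟨fun w w' h => ?_, fun z => ?_⟩)).symm
  · exact Subtype.ext (mul_left_cancel₀ hg (congrArg Subtype.val h))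
  · obtain ⟨w, hw⟩ := hdvd z z.2
    refine ⟨⟨w, mul_left_cancel₀ hg' ?_⟩, Subtype.ext hw.symm⟩
    rw [← Zsqrtd.norm_mul, ← hw, z.2]

lemma normCount_norm_mul_of_prime {π : GaussianInt} (hπ : Prime π) (hconj : π ∣ star π) (n : ℤ) :
    normCount (π.norm * n) = normCount n := by
  refine normCount_norm_mul hπ.ne_zero fun z hz => Zsqrtd.dvd_of_dvd_norm hπ hconj ?_
  rw [hz, Int.cast_mul, Zsqrtd.norm_eq_mul_conj, mul_assoc]
  exact dvd_mul_right _ _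

lemma normCount_two_pow_mul (k : ℕ) (n : ℤ) : normCount (2 ^ k * n) = normCount n := by
  have hnorm : (⟨1, 1⟩ : GaussianInt).norm = 2 := rfl
  have hprime : Prime (⟨1, 1⟩ : GaussianInt) := prime_of_prime_norm (hnorm ▸ Int.prime_two)
  have hconj : (⟨1, 1⟩ : GaussianInt) ∣ star ⟨1, 1⟩ := ⟨⟨0, -1⟩, rfl⟩
  induction k with
  | zero => simp
  | succ k ih =>
    have := normCount_norm_mul_of_prime hprime hconj (2 ^ k * n)
    rwa [hnorm, ih, ← mul_assoc, ← pow_succ'] at this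

lemma normCount_pow_mul_of_mod_four_eq_three {p : ℕ} [Fact p.Prime] (h3 : p % 4 = 3) {n : ℤ}
    (hn : ¬ (p : ℤ) ∣ n) : ∀ k : ℕ, normCount (p ^ k * n) = if Even k then normCount n else 0
  | 0 => by simp
  | 1 => by
    simp only [pow_one, Nat.not_even_one, if_false, normCount, Nat.card_eq_zero]
    refine Or.inl ⟨fun ⟨z, hz⟩ => ?_⟩
    obtain ⟨w, rfl⟩ := Zsqrtd.dvd_of_dvd_norm (prime_of_nat_prime_of_mod_four_eq_three p h3)
      (by simp) (by rw [hz]; push_cast; exact dvd_mul_right _ _)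
    rw [Zsqrtd.norm_mul, Zsqrtd.norm_natCast, mul_assoc] at hz
    exact hn ⟨_, (mul_left_cancel₀ (by exact_mod_cast (Fact.out : p.Prime).ne_zero) hz).symm⟩
  | k + 2 => by
    have := normCount_norm_mul_of_prime (prime_of_nat_prime_of_mod_four_eq_three p h3) (by simp)
      (p ^ k * n)
    rw [Zsqrtd.norm_natCast, ← mul_assoc, ← sq, ← pow_add, add_comm] at this
    rw [this, normCount_pow_mul_of_mod_four_eq_three h3 hn k]
    simp [Nat.even_add]

lemma exists_eq_pow_mul_star_pow_mul {π : GaussianInt} (hπ : Prime π) {n : ℤ} (k : ℕ)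
    {z : GaussianInt} (hz : z.norm = π.norm ^ k * n) :
    ∃ a ≤ k, ∃ w : GaussianInt, w.norm = n ∧ z = π ^ a * star π ^ (k - a) * w := by
  induction k generalizing z with
  | zero => exact ⟨0, le_rfl, z, by simpa using hz, by simp⟩
  | succ k ih =>
    have hnorm : π.norm ≠ 0 := by rw [Ne, norm_eq_zero]; exact hπ.ne_zero
    have hdvd : π ∣ z * star z := by
      rw [← Zsqrtd.norm_eq_mul_conj, hz, pow_succ', mul_assoc, Int.cast_mul,
        Zsqrtd.norm_eq_mul_conj, mul_assoc]
      exact dvd_mul_right _ _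
    rcases hπ.dvd_or_dvd hdvd with ⟨z', rfl⟩ | hstar
    · rw [Zsqrtd.norm_mul, pow_succ', mul_assoc] at hz
      obtain ⟨a, ha, w, hw, rfl⟩ := ih (mul_left_cancel₀ hnorm hz)
      refine ⟨a + 1, by omega, w, hw, ?_⟩
      rw [Nat.add_sub_add_right, pow_succ']
      ring
    · obtain ⟨z', rfl⟩ : star π ∣ z := by
        simpa [starRingEnd_apply] using map_dvd (starRingEnd GaussianInt) hstar
      rw [Zsqrtd.norm_mul, Zsqrtd.norm_conj, pow_succ', mul_assoc] at hz
      obtain ⟨a, ha, w, hw, rfl⟩ := ih (mul_left_cancel₀ hnorm hz)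
      refine ⟨a, by omega, w, hw, ?_⟩
      rw [Nat.sub_add_comm ha, pow_succ']
      ring

lemma normCount_norm_pow_mul {π : GaussianInt} (hπ : Prime π) (hconj : ¬ π ∣ star π) {n : ℤ}
    (hn : ¬ π.norm ∣ n) (k : ℕ) : normCount (π.norm ^ k * n) = (k + 1) * normCount n := by
  have hπ' : star π ≠ 0 := star_ne_zero.2 hπ.ne_zero
  have hcop (a : ℕ) (w : {w : GaussianInt // w.norm = n}) : ¬ π ∣ star π ^ a * w := fun h =>
    (hπ.dvd_or_dvd h).elim (fun h => hconj (hπ.dvd_of_dvd_pow h))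
      (fun h => hn (w.2 ▸ map_dvd Zsqrtd.normMonoidHom h))
  let F : Fin (k + 1) × {w : GaussianInt // w.norm = n} →
      {z : GaussianInt // z.norm = π.norm ^ k * n} := fun x =>
    ⟨π ^ (x.1 : ℕ) * star π ^ (k - x.1) * x.2, by
      rw [Zsqrtd.norm_mul, Zsqrtd.norm_mul, Zsqrtd.norm_pow, Zsqrtd.norm_pow, Zsqrtd.norm_conj,
        x.2.2, ← pow_add, Nat.add_sub_cancel' (Nat.lt_succ_iff.1 x.1.2)]⟩
  have hinj : F.Injective := by
    rintro ⟨a, w⟩ ⟨b, w'⟩ h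
    obtain ⟨hab, hw⟩ := eq_and_eq_of_pow_mul_eq_pow_mul hπ.ne_zero (hcop _ w) (hcop _ w')
      (by simpa only [F, Subtype.mk.injEq, mul_assoc] using h)
    obtain rfl : a = b := Fin.ext hab
    exact Prod.ext rfl (Subtype.ext (mul_left_cancel₀ (pow_ne_zero _ hπ') hw))
  have hsurj : F.Surjective := fun z => by
    obtain ⟨a, ha, w, hw, hz⟩ := exists_eq_pow_mul_star_pow_mul hπ k z.2
    exact ⟨(⟨a, by omega⟩, ⟨w, hw⟩), Subtype.ext hz.symm⟩
  rw [normCount, ← Nat.card_congr (Equiv.ofBijective F ⟨hinj, hsurj⟩), Nat.card_prod,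
    Nat.card_eq_fintype_card, Fintype.card_fin, normCount]

lemma normCount_pow_mul_of_mod_four_eq_one {p : ℕ} [hp : Fact p.Prime] (h1 : p % 4 = 1) {n : ℤ}
    (hn : ¬ (p : ℤ) ∣ n) (k : ℕ) : normCount (p ^ k * n) = (k + 1) * normCount n := by
  obtain ⟨a, b, hab⟩ := Nat.Prime.sq_add_sq (p := p) (by omega)
  have hπ : (⟨a, b⟩ : GaussianInt).norm = p := by
    rw [Zsqrtd.norm_def, ← hab]
    push_cast
    ring
  have hprime := prime_of_prime_norm (hπ ▸ Nat.prime_iff_prime_int.1 hp.out)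
  have := normCount_norm_pow_mul hprime (not_dvd_star_of_norm_eq_prime hp.out (by omega) hπ)
    (hπ ▸ hn) k
  rwa [hπ] at this

lemma normCount_prime_pow_mul {p : ℕ} (hp : p.Prime) {n : ℤ} (hn : ¬ (p : ℤ) ∣ n) (k : ℕ) :
    (normCount (p ^ k * n) : ℤ) = (∑ i ∈ range (k + 1), chiZ p ^ i) * normCount n := by
  have := Fact.mk hp
  obtain rfl | h1 | h3 : p = 2 ∨ p % 4 = 1 ∨ p % 4 = 3 := by
    have := hp.eq_two_or_odd; omega
  · simp [normCount_two_pow_mul, sum_range_succ', chiZ]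
  · simp [normCount_pow_mul_of_mod_four_eq_one h1 hn, chiZ, h1]
  · rw [normCount_pow_mul_of_mod_four_eq_three h3 hn, show chiZ p = -1 by simp [chiZ, h3],
      neg_one_geom_sum]
    split_ifs <;> simp_all [Nat.even_add_one]

end GaussianInt

open GaussianInt in
/-- For every positive integer `m`, the number of ordered representations of `m`
as a sum of two squares of integers equals `4 * ∑_{d ∣ m} χ(d)`. -/
theorem sum_two_squares_count (m : ℕ) (hm : 0 < m) :
    ({x : ℤ × ℤ | x.1 ^ 2 + x.2 ^ 2 = (m : ℤ)}.ncard : ℤ)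
      = 4 * ∑ d ∈ m.divisors, chiZ d := by
  rw [ncard_sq_add_sq_eq_normCount]
  induction m using Nat.recOnPrimePow with
  | zero => omega
  | one => simp [normCount_one, chiZ]
  | prime_pow_mul a p k hp hpa hk ih =>
    have hcop : (p ^ k).Coprime a := (hp.coprime_iff_not_dvd.2 hpa).pow_left k
    push_cast
    rw [normCount_prime_pow_mul hp (mod_cast hpa), ih (Nat.pos_of_mul_pos_left hm),
      sum_divisors_chiZ_mul hcop, sum_divisors_chiZ_prime_pow hp]
    ring
end

section
/- For every positive integer n, the Dirichlet series F_n(s) = ∑_{d ≥ 1, gcd(d, n-1) = 1} f_n(d) d^{-s} converges absolutely for all complex s with Re(s) > 0, where f_n(d) = (χ(d)/φ(d)) λ(d)/λ(gcd(n,d)). -/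
noncomputable def chi (d : ℕ) : ℝ := if d % 4 = 1 then 1 else if d % 4 = 3 then -1 else 0

noncomputable def lam (k : ℕ) : ℝ :=
  ∏ p ∈ k.primeFactors.filter (fun p => 2 < p), ((p : ℝ) - 1) / ((p : ℝ) - 2)

noncomputable def f (n d : ℕ) : ℝ :=
  (chi d / (Nat.totient d : ℝ)) * (lam d / lam (Nat.gcd n d))

/-- auxiliary weight function -/
noncomputable def gw (p : ℕ) : ℝ :=
  if 2 < p then (p : ℝ) / ((p : ℝ) - 2) else (p : ℝ) / ((p : ℝ) - 1)

lemma one_le_lam (k : ℕ) : 1 ≤ lam k := by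
  rw [lam]
  calc (1 : ℝ) = ∏ _p ∈ k.primeFactors.filter (fun p => 2 < p), (1 : ℝ) := by simp
    _ ≤ _ := by
        apply Finset.prod_le_prod (fun _ _ => zero_le_one)
        intro p hp
        simp only [Finset.mem_filter] at hp
        have h2 : (2 : ℝ) < p := by exact_mod_cast hp.2
        rw [le_div_iff₀ (by linarith)]
        linarith

lemma abs_chi_le (d : ℕ) : |chi d| ≤ 1 := by
  unfold chi; split_ifs <;> norm_num

lemma gw_nonneg {p : ℕ} (hp : p.Prime) : 0 ≤ gw p := by
  have h2 : (2 : ℝ) ≤ p := by exact_mod_cast hp.two_le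
  unfold gw
  split_ifs with h
  · have : (2 : ℝ) < p := by exact_mod_cast h
    apply div_nonneg <;> linarith
  · have : p = 2 := le_antisymm (not_lt.mp h) hp.two_le
    subst this; norm_num

lemma gw_le_three {p : ℕ} (hp : p.Prime) : gw p ≤ 3 := by
  unfold gw
  split_ifs with h
  · have h3 : (3 : ℝ) ≤ p := by exact_mod_cast h
    rw [div_le_iff₀ (by linarith)]
    linarith
  · have : p = 2 := le_antisymm (not_lt.mp h) hp.two_le
    subst this; norm_num

/-- The key identity: `lam d * d = φ(d) * ∏ gw p`. -/
lemma lam_mul_eq (d : ℕ) : lam d * d = (Nat.totient d : ℝ) * ∏ p ∈ d.primeFactors, gw p := by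
  have h := Nat.totient_eq_mul_prod_factors d
  have hR : (Nat.totient d : ℝ) = (d : ℝ) * ∏ p ∈ d.primeFactors, (1 - (p : ℝ)⁻¹) := by
    have := congrArg (fun q : ℚ => (q : ℝ)) h
    push_cast at this
    exact_mod_cast this
  rw [hR, mul_assoc, ← Finset.prod_mul_distrib]
  have : lam d = ∏ p ∈ d.primeFactors, (if 2 < p then ((p : ℝ) - 1) / ((p : ℝ) - 2) else 1) := by
    rw [lam, Finset.prod_filter]
  rw [this, mul_comm]
  congr 1
  apply Finset.prod_congr rfl
  intro p hp
  have hp' : p.Prime := Nat.prime_of_mem_primeFactors hp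
  have h2 : (2 : ℝ) ≤ p := by exact_mod_cast hp'.two_le
  have hp0 : (p : ℝ) ≠ 0 := by linarith
  unfold gw
  split_ifs with h
  · have h3 : (2 : ℝ) < p := by exact_mod_cast h
    field_simp
  · have : p = 2 := le_antisymm (not_lt.mp h) hp'.two_le
    subst this; norm_num

/-- The product of weights is at most `3^N * d^ε` for a suitable `N`. -/
lemma prod_gw_le (ε : ℝ) (hε : 0 < ε) :
    ∃ C : ℝ, 0 < C ∧ ∀ d : ℕ, 1 ≤ d →
      (∏ p ∈ d.primeFactors, gw p) ≤ C * (d : ℝ) ^ ε := by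
  set N : ℕ := ⌈(3 : ℝ) ^ (1 / ε)⌉₊ with hN
  refine ⟨3 ^ N, by positivity, fun d hd => ?_⟩
  have hkey : ∀ p : ℕ, p.Prime → N ≤ p → (3 : ℝ) ≤ (p : ℝ) ^ ε := by
    intro p hp hNp
    have h1 : (3 : ℝ) ^ (1 / ε) ≤ (p : ℝ) := le_trans (Nat.le_ceil _) (by exact_mod_cast hNp)
    calc (3 : ℝ) = ((3 : ℝ) ^ (1 / ε)) ^ ε := by
          rw [← Real.rpow_mul (by norm_num), one_div_mul_cancel hε.ne', Real.rpow_one]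
      _ ≤ (p : ℝ) ^ ε := Real.rpow_le_rpow (by positivity) h1 hε.le
  rw [← Finset.prod_filter_mul_prod_filter_not d.primeFactors (fun p => p < N)]
  have hA : (∏ p ∈ d.primeFactors.filter (fun p => p < N), gw p) ≤ 3 ^ N := by
    calc (∏ p ∈ d.primeFactors.filter (fun p => p < N), gw p)
        ≤ 3 ^ (d.primeFactors.filter (fun p => p < N)).card := by
          rw [← Finset.prod_const]
          apply Finset.prod_le_prod
          · intro p hp
            exact gw_nonneg (Nat.prime_of_mem_primeFactors (Finset.mem_filter.mp hp).1)
          · intro p hp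
            exact gw_le_three (Nat.prime_of_mem_primeFactors (Finset.mem_filter.mp hp).1)
      _ ≤ 3 ^ N := by
          apply pow_le_pow_right₀ (by norm_num)
          have : d.primeFactors.filter (fun p => p < N) ⊆ Finset.range N := by
            intro p hp
            exact Finset.mem_range.mpr (Finset.mem_filter.mp hp).2
          simpa using Finset.card_le_card this
  have hB : (∏ p ∈ d.primeFactors.filter (fun p => ¬ p < N), gw p) ≤ (d : ℝ) ^ ε := by
    calc (∏ p ∈ d.primeFactors.filter (fun p => ¬ p < N), gw p)
        ≤ ∏ p ∈ d.primeFactors.filter (fun p => ¬ p < N), (p : ℝ) ^ ε := by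
          apply Finset.prod_le_prod
          · intro p hp
            exact gw_nonneg (Nat.prime_of_mem_primeFactors (Finset.mem_filter.mp hp).1)
          · intro p hp
            have hp' := Finset.mem_filter.mp hp
            have hpp := Nat.prime_of_mem_primeFactors hp'.1
            calc gw p ≤ 3 := gw_le_three hpp
              _ ≤ (p : ℝ) ^ ε := hkey p hpp (not_lt.mp hp'.2)
      _ = (∏ p ∈ d.primeFactors.filter (fun p => ¬ p < N), (p : ℝ)) ^ ε := by
          apply Real.finset_prod_rpow
          intro p _; positivity
      _ ≤ (d : ℝ) ^ ε := by
          apply Real.rpow_le_rpow (by positivity) _ hε.le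
          have hdvd : (∏ p ∈ d.primeFactors.filter (fun p => ¬ p < N), p) ∣ d := by
            refine dvd_trans ?_ (Nat.prod_primeFactors_dvd d)
            exact Finset.prod_dvd_prod_of_subset _ _ _ (Finset.filter_subset _ _)
          have h := Nat.le_of_dvd (by omega) hdvd
          calc (∏ p ∈ d.primeFactors.filter (fun p => ¬ p < N), (p : ℝ))
              = ((∏ p ∈ d.primeFactors.filter (fun p => ¬ p < N), p : ℕ) : ℝ) := by push_cast; rfl
            _ ≤ (d : ℝ) := by exact_mod_cast h
  have hBnn : 0 ≤ ∏ p ∈ d.primeFactors.filter (fun p => ¬ p < N), gw p :=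
    Finset.prod_nonneg fun p hp =>
      gw_nonneg (Nat.prime_of_mem_primeFactors (Finset.mem_filter.mp hp).1)
  have hAnn : 0 ≤ ∏ p ∈ d.primeFactors.filter (fun p => p < N), gw p :=
    Finset.prod_nonneg fun p hp =>
      gw_nonneg (Nat.prime_of_mem_primeFactors (Finset.mem_filter.mp hp).1)
  exact mul_le_mul hA hB hBnn (by positivity)

/-- The Dirichlet series `F_n(s) = ∑_{d ≥ 1, (d, n-1) = 1} f_n(d) d^{-s}` converges
absolutely for `Re(s) > 0`. -/
theorem F_abs_convergent (n : ℕ) (hn : 0 < n) (s : ℂ) (hs : 0 < s.re) :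
    Summable (fun d : ℕ =>
      ‖(if 1 ≤ d ∧ Nat.gcd d (n - 1) = 1 then (f n d : ℂ) * (d : ℂ) ^ (-s) else 0)‖) := by
  set σ := s.re with hσ
  obtain ⟨C, hC, hCle⟩ := prod_gw_le (σ / 2) (by linarith)
  have hsum : Summable (fun d : ℕ => C * (d : ℝ) ^ (-(1 + σ / 2))) := by
    apply Summable.mul_left
    rw [Real.summable_nat_rpow]
    linarith
  apply Summable.of_nonneg_of_le (fun d => norm_nonneg _) _ hsum
  intro d
  by_cases hcond : 1 ≤ d ∧ Nat.gcd d (n - 1) = 1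
  · rw [if_pos hcond]
    have hd1 : 1 ≤ d := hcond.1
    have hd0 : (0 : ℝ) < d := by exact_mod_cast hd1
    have hφ : (0 : ℝ) < Nat.totient d := by
      exact_mod_cast Nat.totient_pos.mpr (by omega)
    -- norm computation
    rw [norm_mul, Complex.norm_natCast_cpow_of_pos (by omega), Complex.norm_real]
    have hlamd : 0 ≤ lam d := le_trans zero_le_one (one_le_lam d)
    have hlamg : 1 ≤ lam (Nat.gcd n d) := one_le_lam _
    -- bound |f n d|
    have hf : |f n d| ≤ lam d / Nat.totient d := by
      rw [f, abs_mul, abs_div, abs_div]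
      rw [abs_of_nonneg hφ.le, abs_of_nonneg hlamd, abs_of_nonneg (by linarith : (0:ℝ) ≤ lam (Nat.gcd n d))]
      calc |chi d| / (Nat.totient d : ℝ) * (lam d / lam (Nat.gcd n d))
          ≤ 1 / (Nat.totient d : ℝ) * (lam d / 1) := by
            gcongr <;> first | exact abs_chi_le d | exact hlamg
        _ = lam d / Nat.totient d := by ring
    have hWd : lam d / (Nat.totient d : ℝ) ≤ C * (d : ℝ) ^ (σ / 2 - 1) := by
      have hid := lam_mul_eq d
      have hW := hCle d hd1
      have heq : lam d / (Nat.totient d : ℝ) = (∏ p ∈ d.primeFactors, gw p) / d := by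
        rw [div_eq_div_iff hφ.ne' hd0.ne', mul_comm (lam d)]
        rw [mul_comm (lam d) (d:ℝ)] at hid
        linarith [hid]
      rw [heq, Real.rpow_sub hd0, Real.rpow_one, ← mul_div_assoc]
      gcongr
    calc |f n d| * (d : ℝ) ^ (-s).re
        ≤ (C * (d : ℝ) ^ (σ / 2 - 1)) * (d : ℝ) ^ (-σ) := by
          apply mul_le_mul (hf.trans hWd) _ (by positivity) (by positivity)
          simp [hσ]
      _ = C * (d : ℝ) ^ (-(1 + σ / 2)) := by
          rw [mul_assoc, ← Real.rpow_add hd0]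
          ring_nf
  · rw [if_neg hcond]
    simp only [norm_zero]
    positivity
end

section
/- There exists a constant C > 0 such that for all positive integers k, λ(k) ≤ C · (log log(10 k))², where λ(k) = ∏_{p ∣ k, p > 2} (p-1)/(p-2). -/
open Finset Real

def primesIoc (a b : ℕ) : Finset ℕ := {p ∈ Ioc a b | p.Prime}

theorem mem_primesIoc {a b p : ℕ} : p ∈ primesIoc a b ↔ (a < p ∧ p ≤ b) ∧ p.Prime := by
  rw [primesIoc, mem_filter, mem_Ioc]

theorem sum_primesIoc_consecutive {M : Type*} [AddCommMonoid M] (f : ℕ → M) {a b c : ℕ}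
    (hab : a ≤ b) (hbc : b ≤ c) :
    ∑ p ∈ primesIoc a b, f p + ∑ p ∈ primesIoc b c, f p = ∑ p ∈ primesIoc a c, f p := by
  simp only [primesIoc, sum_filter, sum_Ioc_consecutive _ hab hbc]

theorem pow_card_primesIoc_le_four_pow (n : ℕ) : n ^ #(primesIoc n (2 * n)) ≤ 4 ^ n :=
  calc n ^ #(primesIoc n (2 * n))
      ≤ ∏ p ∈ primesIoc n (2 * n), p :=
        pow_card_le_prod _ _ _ fun p hp => (mem_primesIoc.1 hp).1.1.le
    _ ≤ n.centralBinom := by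
        refine Nat.le_of_dvd n.centralBinom_pos (prod_primes_dvd _ ?_ ?_)
        · exact fun p hp => Nat.prime_iff.1 (mem_primesIoc.1 hp).2
        · intro p hp
          obtain ⟨⟨hnp, hp2n⟩, hp⟩ := mem_primesIoc.1 hp
          rw [Nat.centralBinom_eq_two_mul_choose, two_mul]
          exact hp.dvd_choose_add hnp hnp (by omega)
    _ ≤ 4 ^ n := n.centralBinom_le_four_pow

theorem sum_inv_primesIoc_le {n : ℕ} (hn : 1 < n) :
    ∑ p ∈ primesIoc n (2 * n), (p : ℝ)⁻¹ ≤ log 4 / log n := by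
  set c := #(primesIoc n (2 * n))
  have hn0 : (0 : ℝ) < n := by positivity
  have hlogn : 0 < log n := log_pos (by exact_mod_cast hn)
  have hcard : c * log n ≤ n * log 4 := by
    have h := log_le_log (by positivity) (by exact_mod_cast pow_card_primesIoc_le_four_pow n :
      (n : ℝ) ^ c ≤ (4 : ℝ) ^ n)
    rwa [log_pow, log_pow] at h
  calc ∑ p ∈ primesIoc n (2 * n), (p : ℝ)⁻¹
      ≤ ∑ _p ∈ primesIoc n (2 * n), (n : ℝ)⁻¹ :=
        sum_le_sum fun p hp => inv_anti₀ hn0 (by exact_mod_cast (mem_primesIoc.1 hp).1.1.le)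
    _ = c / n := by rw [sum_const, nsmul_eq_mul, div_eq_mul_inv]
    _ ≤ log 4 / log n := by
        rw [div_le_div_iff₀ hn0 hlogn]; linarith

theorem sum_inv_primesIoc_two_pow_le (j : ℕ) :
    ∑ p ∈ primesIoc (2 ^ (j + 1)) (2 ^ (j + 2)), (p : ℝ)⁻¹ ≤ 2 / (j + 1) := by
  have h := sum_inv_primesIoc_le (Nat.one_lt_two_pow (Nat.succ_ne_zero j))
  rwa [← pow_succ', show (4 : ℝ) = 2 ^ 2 by norm_num, Nat.cast_pow, log_pow, log_pow,
    Nat.cast_ofNat, mul_div_mul_right _ _ (log_pos one_lt_two).ne', Nat.cast_succ] at h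

theorem sum_inv_primesIoc_two_le_harmonic (I : ℕ) :
    ∑ p ∈ primesIoc 2 (2 ^ (I + 1)), (p : ℝ)⁻¹ ≤ 2 * harmonic I := by
  induction I with
  | zero => simp [primesIoc]
  | succ I ih =>
    have hblock := sum_inv_primesIoc_two_pow_le I
    rw [← sum_primesIoc_consecutive _ (Nat.le_self_pow (by omega) 2)
      (Nat.pow_le_pow_right two_pos (by omega : I + 1 ≤ I + 2)), harmonic_succ]
    push_cast
    rw [div_eq_mul_inv] at hblock
    linarith

theorem inv_sub_two_le {x : ℝ} (hx : 3 ≤ x) : (x - 2)⁻¹ ≤ x⁻¹ + 6 * (x ^ 2)⁻¹ := by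
  have hx2 : 0 < x - 2 := by linarith
  rw [show x⁻¹ + 6 * (x ^ 2)⁻¹ = (x + 6) / x ^ 2 by field_simp, inv_eq_one_div,
    div_le_div_iff₀ hx2 (by positivity)]
  nlinarith

theorem sum_inv_sub_two_primesIoc_le (I : ℕ) :
    ∑ p ∈ primesIoc 2 (2 ^ (I + 1)), ((p : ℝ) - 2)⁻¹ ≤ 2 * harmonic I + 4 := by
  have hsq : ∑ p ∈ primesIoc 2 (2 ^ (I + 1)), ((p : ℝ) ^ 2)⁻¹ ≤ 2 / 3 :=
    calc ∑ p ∈ primesIoc 2 (2 ^ (I + 1)), ((p : ℝ) ^ 2)⁻¹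
        ≤ ∑ n ∈ Ioo 2 (2 ^ (I + 1) + 1), (((n : ℕ) : ℝ) ^ 2)⁻¹ := by
          refine sum_le_sum_of_subset_of_nonneg (fun p hp => ?_) fun _ _ _ => by positivity
          obtain ⟨⟨h2p, hp⟩, -⟩ := mem_primesIoc.1 hp
          exact mem_Ioo.2 ⟨h2p, by omega⟩
      _ ≤ 2 / 3 := (sum_Ioo_inv_sq_le 2 _).trans_eq (by norm_num)
  calc ∑ p ∈ primesIoc 2 (2 ^ (I + 1)), ((p : ℝ) - 2)⁻¹
      ≤ ∑ p ∈ primesIoc 2 (2 ^ (I + 1)), ((p : ℝ)⁻¹ + 6 * ((p : ℝ) ^ 2)⁻¹) :=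
        sum_le_sum fun p hp => inv_sub_two_le (by exact_mod_cast (mem_primesIoc.1 hp).1.1)
    _ = ∑ p ∈ primesIoc 2 (2 ^ (I + 1)), (p : ℝ)⁻¹
          + 6 * ∑ p ∈ primesIoc 2 (2 ^ (I + 1)), ((p : ℝ) ^ 2)⁻¹ := by
        rw [sum_add_distrib, mul_sum]
    _ ≤ 2 * harmonic I + 4 := by linarith [sum_inv_primesIoc_two_le_harmonic I]

theorem Nat.two_pow_card_primeFactors_le {k : ℕ} (hk : k ≠ 0) : 2 ^ #k.primeFactors ≤ k :=
  (pow_card_le_prod _ _ _ fun _p hp => (Nat.prime_of_mem_primeFactors hp).two_le).trans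
    (Nat.le_of_dvd (Nat.pos_of_ne_zero hk) k.prod_primeFactors_dvd)

theorem sum_inv_sub_two_primeFactors_le {k I : ℕ} (hk : k ≠ 0) (hkI : k < 2 ^ 2 ^ I) :
    ∑ p ∈ k.primeFactors with 2 < p, ((p : ℝ) - 2)⁻¹ ≤ 2 * harmonic I + 5 := by
  rw [← sum_filter_add_sum_filter_not _ (· ≤ 2 ^ (I + 1))]
  have hsmall : ∑ p ∈ {p ∈ k.primeFactors | 2 < p} with p ≤ 2 ^ (I + 1), ((p : ℝ) - 2)⁻¹
      ≤ 2 * harmonic I + 4 := by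
    refine le_trans (sum_le_sum_of_subset_of_nonneg (fun p hp => ?_) fun p hp _ => ?_)
      (sum_inv_sub_two_primesIoc_le I)
    · obtain ⟨⟨hpk, h2p⟩, hpI⟩ := mem_filter.1 hp |>.imp_left mem_filter.1
      exact mem_primesIoc.2 ⟨⟨h2p, hpI⟩, Nat.prime_of_mem_primeFactors hpk⟩
    · have : (2 : ℝ) < p := by exact_mod_cast (mem_primesIoc.1 hp).1.1
      exact inv_nonneg.2 (by linarith)
  have hlarge : ∑ p ∈ {p ∈ k.primeFactors | 2 < p} with ¬p ≤ 2 ^ (I + 1), ((p : ℝ) - 2)⁻¹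
      ≤ 1 := by
    set Q := {p ∈ {p ∈ k.primeFactors | 2 < p} | ¬p ≤ 2 ^ (I + 1)}
    have hcard : (#Q : ℝ) ≤ 2 ^ I := by
      have hQ : #Q ≤ #k.primeFactors :=
        card_le_card ((filter_subset _ _).trans (filter_subset _ _))
      have : #k.primeFactors < 2 ^ I := (Nat.pow_lt_pow_iff_right (by norm_num)).1
        ((Nat.two_pow_card_primeFactors_le hk).trans_lt hkI)
      exact_mod_cast (hQ.trans this.le)
    calc ∑ p ∈ Q, ((p : ℝ) - 2)⁻¹
        ≤ ∑ _p ∈ Q, ((2 : ℝ) ^ I)⁻¹ := by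
          refine sum_le_sum fun p hp => inv_anti₀ (by positivity) ?_
          have hp : 2 ^ (I + 1) + 1 ≤ p := by
            have := (mem_filter.1 hp).2; omega
          have hp' : (2 : ℝ) ^ (I + 1) + 1 ≤ p := by exact_mod_cast hp
          have : (1 : ℝ) ≤ 2 ^ I := one_le_pow₀ one_le_two
          rw [pow_succ] at hp'
          linarith
      _ = #Q * ((2 : ℝ) ^ I)⁻¹ := by rw [sum_const, nsmul_eq_mul]
      _ ≤ 1 := by rw [← div_eq_mul_inv, div_le_one (by positivity)]; exact hcard
  linarith

theorem lam_le_exp_sum_inv_sub_two (k : ℕ) :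
    lam k ≤ exp (∑ p ∈ k.primeFactors with 2 < p, ((p : ℝ) - 2)⁻¹) := by
  rw [lam, exp_sum]
  refine prod_le_prod (fun p hp => ?_) fun p hp => ?_ <;>
    have hp : (2 : ℝ) < p := by exact_mod_cast (mem_filter.1 hp).2
  · exact div_nonneg (by linarith) (by linarith)
  · have hp2 : (p : ℝ) - 2 ≠ 0 := by linarith
    rw [show ((p : ℝ) - 1) / (p - 2) = ((p : ℝ) - 2)⁻¹ + 1 by field_simp; ring]
    exact add_one_le_exp _

theorem lam_le_of_lt_two_pow_two_pow {k I : ℕ} (hk : k ≠ 0) (hI : I ≠ 0) (hkI : k < 2 ^ 2 ^ I) :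
    lam k ≤ exp 7 * I ^ 2 :=
  calc lam k ≤ exp (2 * harmonic I + 5) :=
        (lam_le_exp_sum_inv_sub_two k).trans
          (exp_le_exp.2 (sum_inv_sub_two_primeFactors_le hk hkI))
    _ ≤ exp (7 + log (I ^ 2)) := by
        rw [log_pow]; exact exp_le_exp.2 (by push_cast; linarith [harmonic_le_one_add_log I])
    _ = exp 7 * I ^ 2 := by rw [exp_add, exp_log (by positivity)]

theorem lt_two_pow_two_pow_nat_log_log_add_one (k : ℕ) :
    k < 2 ^ 2 ^ (Nat.log 2 (Nat.log 2 k) + 1) :=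
  (Nat.lt_pow_succ_log_self one_lt_two k).trans_le <|
    Nat.pow_le_pow_right two_pos (Nat.lt_pow_succ_log_self one_lt_two _)

theorem nat_log_log_add_one_le_five_mul_log_log {k : ℕ} (hk : k ≠ 0) :
    ((Nat.log 2 (Nat.log 2 k) + 1 : ℕ) : ℝ) ≤ 5 * log (log (10 * k)) := by
  set J := Nat.log 2 k
  set L := log (10 * k)
  have hlog2 := log_two_gt_d9
  have hk1 : (1 : ℝ) ≤ k := by exact_mod_cast Nat.one_le_iff_ne_zero.2 hk
  have hJ : J * log 2 ≤ log k := by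
    have := log_le_log (by positivity)
      (by exact_mod_cast Nat.pow_log_le_self 2 hk : (2 : ℝ) ^ J ≤ k)
    rwa [log_pow] at this
  have hL : log k + 3 * log 2 ≤ L := by
    have h8 : log ((2 : ℝ) ^ 3) ≤ log 10 := log_le_log (by norm_num) (by norm_num)
    rw [log_pow, Nat.cast_ofNat] at h8
    rw [show L = log 10 + log k from log_mul (by norm_num) (by positivity)]
    linarith
  have hJL : (J + 1 : ℝ) ≤ 2 * L := by
    nlinarith [log_nonneg hk1,
      mul_nonneg (Nat.cast_nonneg J) (by linarith : (0 : ℝ) ≤ log 2 - 1 / 2)]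
  have hpow : ((2 ^ Nat.log 2 J : ℕ) : ℝ) ≤ J + 1 := by
    exact_mod_cast (Nat.pow_le_pow_right two_pos (Nat.log_mono_right J.le_succ)).trans
      (Nat.pow_log_le_self 2 J.succ_ne_zero)
  have hlogJ : Nat.log 2 J * log 2 ≤ log 2 + log L := by
    have := log_le_log (by positivity) (hpow.trans hJL)
    rwa [Nat.cast_pow, Nat.cast_ofNat, log_pow, log_mul two_ne_zero (by linarith)] at this
  have hlogL : log 2 ≤ log L := log_le_log two_pos (by linarith [log_nonneg hk1])
  push_cast
  nlinarith

/-- `λ(k) ≪ (log log (10 k))²`. -/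
theorem lam_bound :
    ∃ C > 0, ∀ k : ℕ, 0 < k → lam k ≤ C * (Real.log (Real.log (10 * k))) ^ 2 := by
  refine ⟨25 * exp 7, by positivity, fun k hk => ?_⟩
  set I := Nat.log 2 (Nat.log 2 k) + 1
  calc lam k ≤ exp 7 * I ^ 2 :=
        lam_le_of_lt_two_pow_two_pow hk.ne' (Nat.add_one_ne_zero _)
          (lt_two_pow_two_pow_nat_log_log_add_one k)
    _ ≤ exp 7 * (5 * log (log (10 * k))) ^ 2 := by
        gcongr; exact nat_log_log_add_one_le_five_mul_log_log hk.ne'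
    _ = 25 * exp 7 * log (log (10 * k)) ^ 2 := by ring
end
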